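/- For i ∈ ℤ let η_i : ℚ_p → ℂ be η_i(t) = (1 − 1/p)^{−1/2}·p^{−i/2}·1_{|t|_p = p^i}(t). Then for all i, j ∈ ℤ, ⟨𝓕(η_i), η_j⟩ = (1/2π)·∫_0^{2π} ((√p − e^{iθ})/(√p − e^{−iθ}))·e^{−i(i+j)θ} dθ. (Under the isometry sending η_i to z^i on the circle, the additive Fourier transform restricted to unit-invariant functions becomes the unitary operator f(z) ↦ ((√p − z)/(√p − conj z))·f(conj z) on L²(S¹).) -/

import Mathlib

/-!
`η_i` is a multiple of the indicator of the sphere `|t|_p = p^i`, the difference of the balls of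
radii `p^i` and `p^(i-1)`. The ball of radius `p^k` is a disjoint union of `p` translates of the
ball of radius `p^(k-1)`, so its Haar measure is `p^k`. The integral of `t ↦ e(tξ)` over it is
that volume when `|ξ|_p ≤ p^(-k)` and vanishes otherwise: translating by a point where the
character is nontrivial multiplies the integral by a constant `≠ 1`. Hence `𝓕η_i` is constant on
every sphere `|ξ|_p = p^j`, and with `s = √p`, `n = i + j` the matrix element is `s^n - s^(n-2)`
for `n ≤ 0`, `-s⁻¹` for `n = 1` and `0` for `n ≥ 2`.

On the circle, for `n ≤ 0` the integrand is `z / (z - s⁻¹) · z^(-n) (s - z) / s`, and Cauchy's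
formula evaluates the average at `z = s⁻¹`. For `n ≥ 1`, after `z ↦ z⁻¹` the integrand becomes
`(s z - 1) z^(n-1) / (s - z)`, holomorphic on the closed disc, and the mean value property
evaluates it at `0`.
-/

open MeasureTheory Complex

variable {p : ℕ} [Fact p.Prime]

/-- The `p`-adic Fourier transform `𝓕f(ξ) = ∫ f(t)·e(tξ) dμ(t)`. -/
noncomputable def padicFourier [MeasurableSpace ℚ_[p]] (μ : Measure ℚ_[p])
    (e : AddChar ℚ_[p] Circle) (f : ℚ_[p] → ℂ) (ξ : ℚ_[p]) : ℂ :=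
  ∫ t, f t * (e (t * ξ) : ℂ) ∂μ

/-- The inverse `p`-adic Fourier transform `𝓕⁻¹f(t) = ∫ f(ξ)·e(−tξ) dμ(ξ)`. -/
noncomputable def padicFourierInv [MeasurableSpace ℚ_[p]] (μ : Measure ℚ_[p])
    (e : AddChar ℚ_[p] Circle) (f : ℚ_[p] → ℂ) (t : ℚ_[p]) : ℂ :=
  ∫ ξ, f ξ * (e (-(t * ξ)) : ℂ) ∂μ

/-- The conductor operator on `ℚ_p`:
`H(φ)(t) = log|t|_p·φ(t) + ∫ log|ξ|_p·(𝓕⁻¹φ)(ξ)·e(tξ) dμ(ξ)`. -/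
noncomputable def padicCondOp [MeasurableSpace ℚ_[p]] (μ : Measure ℚ_[p])
    (e : AddChar ℚ_[p] Circle) (φ : ℚ_[p] → ℂ) (t : ℚ_[p]) : ℂ :=
  (Real.log ‖t‖ : ℂ) * φ t +
    ∫ ξ, (Real.log ‖ξ‖ : ℂ) * padicFourierInv μ e φ ξ * (e (t * ξ) : ℂ) ∂μ

/-- The orthonormal family `η_i(t) = (1 − 1/p)^{−1/2}·p^{−i/2}·1_{|t|_p = p^i}(t)`. -/
noncomputable def eta (i : ℤ) (t : ℚ_[p]) : ℂ :=
  (((1 - 1 / (p : ℝ)) ^ (-(1 / 2 : ℝ)) * (p : ℝ) ^ (-((i : ℝ)) / 2) : ℝ) : ℂ) *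
    (if ‖t‖ = (p : ℝ) ^ i then 1 else 0)

open Metric Set

theorem AddSubgroup.setIntegral_eq_zero_of_add_eq_mul {G : Type*} [AddGroup G]
    [MeasurableSpace G] [MeasurableAdd G] {μ : Measure G} [μ.IsAddRightInvariant]
    (H : AddSubgroup G) (hH : MeasurableSet (H : Set G)) {a : G} (ha : a ∈ H) {c : ℂ}
    (hc : c ≠ 1) {f : G → ℂ} (hf : ∀ x, f (x + a) = c * f x) :
    ∫ x in H, f x ∂μ = 0 := by
  have hshift : ∀ x, (H : Set G).indicator f (x + a) = c * (H : Set G).indicator f x := by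
    intro x
    by_cases hx : x ∈ H
    · simp [hx, H.add_mem hx ha, hf]
    · simp [hx, (H.add_mem_cancel_right ha).not.mpr hx]
  have h := integral_add_right_eq_self (μ := μ) ((H : Set G).indicator f) a
  simp_rw [hshift, integral_const_mul] at h
  rw [← integral_indicator hH]
  by_contra h0
  exact hc ((mul_eq_right₀ h0).mp h)

namespace Padic

lemma one_lt_prime : (1 : ℝ) < p := mod_cast (Fact.out : p.Prime).one_lt

lemma prime_pos : (0 : ℝ) < p := zero_lt_one.trans one_lt_prime

lemma ball_zpow_eq_closedBall (k : ℤ) :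
    ball (0 : ℚ_[p]) (p ^ k) = closedBall 0 (p ^ (k - 1)) := by
  ext x
  simp only [mem_ball_zero_iff, mem_closedBall_zero_iff, norm_lt_pow_iff_norm_le_pow_sub_one]

lemma sphere_zpow_eq_diff (k : ℤ) :
    sphere (0 : ℚ_[p]) (p ^ k) = closedBall 0 (p ^ k) \ closedBall 0 (p ^ (k - 1)) := by
  rw [← ball_zpow_eq_closedBall, closedBall_sdiff_ball]

lemma closedBall_zpow_sub_one_subset (k : ℤ) :
    closedBall (0 : ℚ_[p]) (p ^ (k - 1)) ⊆ closedBall 0 (p ^ k) :=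
  closedBall_subset_closedBall (zpow_le_zpow_right₀ one_lt_prime.le (by omega))

lemma closedBall_zpow_eq_iUnion (k : ℤ) :
    closedBall (0 : ℚ_[p]) (p ^ k) =
      ⋃ m : Fin p, closedBall ((m : ℚ_[p]) * p ^ (-k)) (p ^ (k - 1)) := by
  have hp0 : (p : ℚ_[p]) ≠ 0 := Nat.cast_ne_zero.2 (Fact.out : p.Prime).ne_zero
  have hpk : (0 : ℝ) < p ^ k := zpow_pos prime_pos k
  apply subset_antisymm
  · intro x hx
    have hz : ‖x * p ^ k‖ ≤ 1 := by
      rw [norm_mul, norm_p_zpow, zpow_neg, ← div_eq_mul_inv, div_le_one hpk]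
      exact mem_closedBall_zero_iff.mp hx
    let z : ℤ_[p] := ⟨x * p ^ k, hz⟩
    have hzx : (z : ℚ_[p]) = x * p ^ k := rfl
    have hm : ‖z - z.zmodRepr‖ ≤ p ^ (-1 : ℤ) :=
      (PadicInt.norm_le_pow_iff_norm_lt_pow_add_one _ _).2
        (by simpa using z.norm_sub_zmodRepr_lt_one)
    refine mem_iUnion.2 ⟨⟨z.zmodRepr, z.zmodRepr_lt_p⟩, ?_⟩
    have hx : x - z.zmodRepr * p ^ (-k) = ((z - z.zmodRepr : ℤ_[p]) : ℚ_[p]) * p ^ (-k) := by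
      rw [PadicInt.coe_sub, PadicInt.coe_natCast, hzx, sub_mul, mul_assoc, ← zpow_add₀ hp0,
        add_neg_cancel, zpow_zero, mul_one]
    rw [mem_closedBall, dist_eq_norm, Fin.val_mk, hx, norm_mul, norm_p_zpow, neg_neg,
      ← PadicInt.norm_def, zpow_sub_one₀ prime_pos.ne', mul_comm _ (_ ^ k)]
    exact mul_le_mul_of_nonneg_left (by rwa [← zpow_neg_one]) hpk.le
  · refine iUnion_subset fun m ↦ ?_
    have hc : (m : ℚ_[p]) * p ^ (-k) ∈ closedBall 0 (p ^ k) := by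
      rw [mem_closedBall_zero_iff, norm_mul, norm_p_zpow, neg_neg]
      exact mul_le_of_le_one_left hpk.le (IsUltrametricDist.norm_natCast_le_one ℚ_[p] m)
    rw [IsUltrametricDist.closedBall_eq_of_mem hc]
    exact closedBall_subset_closedBall (zpow_le_zpow_right₀ one_lt_prime.le (by omega))

lemma pairwise_disjoint_closedBall_zpow (k : ℤ) :
    Pairwise (Function.onFun Disjoint fun m : Fin p ↦
      closedBall ((m : ℚ_[p]) * p ^ (-k)) (p ^ (k - 1))) := by
  intro m m' hne
  rw [Function.onFun, Set.disjoint_left]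
  intro x hx hx'
  have hdist : ‖((m - m' : ℤ) : ℚ_[p])‖ * p ^ k ≤ p ^ (k - 1) := by
    have := (IsUltrametricDist.dist_triangle_max _ x _).trans
      (max_le (mem_closedBall'.mp hx) (mem_closedBall.mp hx'))
    rwa [dist_eq_norm, ← sub_mul, norm_mul, norm_p_zpow, neg_neg,
      show (m : ℚ_[p]) - m' = ((m - m' : ℤ) : ℚ_[p]) by push_cast; ring] at this
  have hdvd : (p : ℤ) ∣ m - m' := by
    rw [← pow_one (p : ℤ), ← norm_int_le_pow_iff_dvd, Nat.cast_one]
    rwa [zpow_sub_one₀ prime_pos.ne', mul_comm _ (_ ^ k),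
      mul_le_mul_iff_right₀ (zpow_pos prime_pos k), ← zpow_neg_one] at hdist
  refine hne (Fin.ext ?_)
  have := Int.eq_zero_of_abs_lt_dvd hdvd (by have := m.2; have := m'.2; rw [abs_lt]; omega)
  omega

section Integral

variable [MeasurableSpace ℚ_[p]] [BorelSpace ℚ_[p]] (μ : Measure ℚ_[p])

lemma setIntegral_char_closedBall_of_norm_le (e : AddChar ℚ_[p] Circle)
    (he1 : ∀ x : ℤ_[p], e x = 1) {k : ℤ} {ξ : ℚ_[p]} (hξ : ‖ξ‖ ≤ p ^ (-k)) :
    ∫ t in closedBall 0 (p ^ k), (e (t * ξ) : ℂ) ∂μ = μ.real (closedBall 0 (p ^ k)) := by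
  have hone : ∀ t ∈ closedBall (0 : ℚ_[p]) (p ^ k), (e (t * ξ) : ℂ) = 1 := by
    intro t ht
    have htξ : ‖t * ξ‖ ≤ 1 := calc
      ‖t * ξ‖ = ‖t‖ * ‖ξ‖ := norm_mul t ξ
      _ ≤ p ^ k * p ^ (-k) :=
        mul_le_mul (mem_closedBall_zero_iff.mp ht) hξ (norm_nonneg _) (zpow_nonneg prime_pos.le _)
      _ = 1 := by rw [← zpow_add₀ prime_pos.ne', add_neg_cancel, zpow_zero]
    simpa using congrArg ((↑) : Circle → ℂ) (he1 ⟨t * ξ, htξ⟩)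
  rw [setIntegral_congr_fun measurableSet_closedBall hone, setIntegral_const, Complex.real_smul,
    mul_one]

variable [μ.IsAddHaarMeasure]

lemma addHaar_real_closedBall_zpow_eq_mul (k : ℤ) :
    μ.real (closedBall (0 : ℚ_[p]) (p ^ k)) = p * μ.real (closedBall 0 (p ^ (k - 1))) := by
  rw [closedBall_zpow_eq_iUnion, measureReal_iUnion_fintype (pairwise_disjoint_closedBall_zpow k)
    (fun _ ↦ measurableSet_closedBall) (fun _ ↦ measure_closedBall_lt_top.ne)]
  simp [Measure.addHaar_real_closedBall_center]

lemma addHaar_real_closedBall_zpow (k : ℤ) :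
    μ.real (closedBall (0 : ℚ_[p]) (p ^ k)) = p ^ k * μ.real (closedBall 0 1) := by
  have hp : (p : ℝ) ≠ 0 := prime_pos.ne'
  induction k using Int.induction_on with
  | zero => simp
  | succ k ih =>
    rw [addHaar_real_closedBall_zpow_eq_mul, add_sub_cancel_right, ih, zpow_add_one₀ hp]
    ring
  | pred k ih =>
    rw [addHaar_real_closedBall_zpow_eq_mul] at ih
    set x := μ.real (closedBall (0 : ℚ_[p]) (p ^ (-(k : ℤ) - 1)))
    rw [zpow_sub_one₀ hp]
    field_simp
    linarith

lemma addHaar_real_sphere_zpow (k : ℤ) :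
    μ.real (sphere (0 : ℚ_[p]) (p ^ k)) = (p ^ k - p ^ (k - 1)) * μ.real (closedBall 0 1) := by
  rw [sphere_zpow_eq_diff, measureReal_sdiff (closedBall_zpow_sub_one_subset k)
    measurableSet_closedBall measure_closedBall_lt_top.ne, addHaar_real_closedBall_zpow,
    addHaar_real_closedBall_zpow, sub_mul]

variable (e : AddChar ℚ_[p] Circle)

lemma setIntegral_char_closedBall_of_lt_norm (he2 : ∃ x : ℚ_[p], ‖x‖ ≤ p ∧ e x ≠ 1) {k : ℤ}
    {ξ : ℚ_[p]} (hξ : p ^ (-k) < ‖ξ‖) :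
    ∫ t in closedBall 0 (p ^ k), (e (t * ξ) : ℂ) ∂μ = 0 := by
  obtain ⟨x, hx, hex⟩ := he2
  have hp : (0 : ℝ) < p := prime_pos
  have hξ0 : ξ ≠ 0 := norm_pos_iff.mp ((zpow_pos hp _).trans hξ)
  have hξ' : p ^ (-k + 1) ≤ ‖ξ‖ := by
    by_contra! h
    exact hξ.not_ge ((norm_le_pow_iff_norm_lt_pow_add_one ξ (-k)).2 h)
  let H := (IsUltrametricDist.closedBall_openAddSubgroup ℚ_[p] (zpow_pos hp k)).toAddSubgroup
  have hx0 : x / ξ ∈ H := by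
    change x / ξ ∈ closedBall 0 (p ^ k)
    rw [mem_closedBall_zero_iff, norm_div, div_le_iff₀ (norm_pos_iff.mpr hξ0)]
    calc ‖x‖ ≤ p := hx
      _ = p ^ k * p ^ (-k + 1) := by rw [← zpow_add₀ hp.ne', add_neg_cancel_left, zpow_one]
      _ ≤ p ^ k * ‖ξ‖ := mul_le_mul_of_nonneg_left hξ' (zpow_nonneg hp.le _)
  refine H.setIntegral_eq_zero_of_add_eq_mul measurableSet_closedBall hx0
    (fun h ↦ hex (Subtype.ext h)) fun t ↦ ?_
  rw [add_mul, div_mul_cancel₀ x hξ0, AddChar.map_add_eq_mul, Circle.coe_mul, mul_comm]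

lemma setIntegral_char_closedBall (hμ : μ (closedBall 0 1) = 1)
    (he1 : ∀ x : ℤ_[p], e x = 1) (he2 : ∃ x : ℚ_[p], ‖x‖ ≤ p ∧ e x ≠ 1) (k : ℤ) (ξ : ℚ_[p]) :
    ∫ t in closedBall 0 (p ^ k), (e (t * ξ) : ℂ) ∂μ =
      if ‖ξ‖ ≤ p ^ (-k) then (p : ℂ) ^ k else 0 := by
  split_ifs with hξ
  · rw [setIntegral_char_closedBall_of_norm_le μ e he1 hξ, addHaar_real_closedBall_zpow,
      measureReal_def, hμ]
    simp
  · exact setIntegral_char_closedBall_of_lt_norm μ e he2 (not_le.mp hξ)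

lemma setIntegral_char_sphere (hμ : μ (closedBall 0 1) = 1) (he : Continuous e)
    (he1 : ∀ x : ℤ_[p], e x = 1) (he2 : ∃ x : ℚ_[p], ‖x‖ ≤ p ∧ e x ≠ 1) {i j : ℤ}
    {ξ : ℚ_[p]} (hξ : ‖ξ‖ = p ^ j) :
    ∫ t in sphere 0 (p ^ i), (e (t * ξ) : ℂ) ∂μ =
      (if i + j ≤ 0 then (p : ℂ) ^ i else 0) - if i + j ≤ 1 then (p : ℂ) ^ (i - 1) else 0 := by
  have hle : ∀ k : ℤ, ‖ξ‖ ≤ p ^ (-k) ↔ k + j ≤ 0 := fun k ↦ by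
    rw [hξ, zpow_le_zpow_iff_right₀ one_lt_prime]
    omega
  have hint : IntegrableOn (fun t ↦ (e (t * ξ) : ℂ)) (closedBall 0 (p ^ i)) μ :=
    (by fun_prop : Continuous fun t ↦ (e (t * ξ) : ℂ)).continuousOn.integrableOn_compact
      (isCompact_closedBall 0 _)
  rw [sphere_zpow_eq_diff, setIntegral_sdiff measurableSet_closedBall hint
    (closedBall_zpow_sub_one_subset i), setIntegral_char_closedBall μ e hμ he1 he2,
    setIntegral_char_closedBall μ e hμ he1 he2]
  simp only [hle, show i - 1 + j ≤ 0 ↔ i + j ≤ 1 by omega]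

end Integral

end Padic

noncomputable def etaConst (p : ℕ) (i : ℤ) : ℝ :=
  (1 - 1 / (p : ℝ)) ^ (-(1 / 2 : ℝ)) * (p : ℝ) ^ (-((i : ℝ)) / 2)

lemma eta_eq_indicator (i : ℤ) :
    eta (p := p) i = (sphere 0 ((p : ℝ) ^ i)).indicator fun _ ↦ (etaConst p i : ℂ) := by
  ext t
  simp [_root_.eta, etaConst, indicator]

lemma conj_eta (i : ℤ) (t : ℚ_[p]) : (starRingEnd ℂ) (eta i t) = eta i t := by
  rw [eta_eq_indicator]
  by_cases ht : t ∈ sphere 0 ((p : ℝ) ^ i)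
  · rw [indicator_of_mem ht, conj_ofReal]
  · rw [indicator_of_notMem ht, map_zero]

lemma etaConst_mul_etaConst (i j : ℤ) :
    etaConst p i * etaConst p j * (p ^ j - p ^ (j - 1)) = √p ^ (j - i) := by
  have hp : (0 : ℝ) < p := Padic.prime_pos
  have hs : (0 : ℝ) < √p := Real.sqrt_pos.mpr hp
  have hq : 0 < 1 - 1 / (p : ℝ) := sub_pos.mpr ((div_lt_one hp).mpr Padic.one_lt_prime)
  have hsq : ∀ k : ℤ, (p : ℝ) ^ k = √p ^ (2 * k) := fun k ↦ by
    rw [zpow_mul, zpow_ofNat, Real.sq_sqrt hp.le]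
  have hrpow : ∀ k : ℤ, (p : ℝ) ^ (-(k : ℝ) / 2) = √p ^ (-k) := fun k ↦ by
    rw [Real.sqrt_eq_rpow, ← Real.rpow_intCast, ← Real.rpow_mul hp.le]
    push_cast
    ring_nf
  have ha : (1 - 1 / (p : ℝ)) ^ (-(1 / 2 : ℝ)) * (1 - 1 / (p : ℝ)) ^ (-(1 / 2 : ℝ)) =
      (1 - 1 / (p : ℝ))⁻¹ := by
    rw [← Real.rpow_add hq]
    norm_num [Real.rpow_neg_one]
  calc etaConst p i * etaConst p j * (p ^ j - p ^ (j - 1))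
      = ((1 - 1 / (p : ℝ)) ^ (-(1 / 2 : ℝ)) * (1 - 1 / (p : ℝ)) ^ (-(1 / 2 : ℝ))) *
          (1 - 1 / (p : ℝ)) * (√p ^ (-i) * √p ^ (-j) * p ^ j) := by
        rw [etaConst, etaConst, hrpow, hrpow, zpow_sub_one₀ hp.ne']
        ring
    _ = √p ^ (j - i) := by
        rw [ha, inv_mul_cancel₀ hq.ne', one_mul, hsq, ← zpow_add₀ hs.ne', ← zpow_add₀ hs.ne']
        ring_nf

section Fourier

variable [MeasurableSpace ℚ_[p]] [BorelSpace ℚ_[p]] (μ : Measure ℚ_[p]) (e : AddChar ℚ_[p] Circle)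

lemma padicFourier_eta (i : ℤ) (ξ : ℚ_[p]) :
    padicFourier μ e (eta i) ξ = etaConst p i * ∫ t in sphere 0 (p ^ i), (e (t * ξ) : ℂ) ∂μ := by
  rw [padicFourier, ← integral_const_mul, ← integral_indicator isClosed_sphere.measurableSet]
  congr 1 with t
  rw [eta_eq_indicator]
  exact (indicator_mul_left (sphere 0 ((p : ℝ) ^ i)) (fun _ ↦ (etaConst p i : ℂ))
    (fun t ↦ (e (t * ξ) : ℂ))).symm

theorem integral_padicFourier_eta_mul_conj_eta [μ.IsAddHaarMeasure]
    (hμ : μ (closedBall 0 1) = 1) (he : Continuous e) (he1 : ∀ x : ℤ_[p], e x = 1)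
    (he2 : ∃ x : ℚ_[p], ‖x‖ ≤ p ∧ e x ≠ 1) (i j : ℤ) :
    ∫ t, padicFourier μ e (eta i) t * (starRingEnd ℂ) (eta j t) ∂μ =
      (if i + j ≤ 0 then (√p : ℂ) ^ (i + j) else 0) -
        if i + j ≤ 1 then (√p : ℂ) ^ (i + j - 2) else 0 := by
  have hs : (√p : ℂ) ≠ 0 := by
    exact_mod_cast (Real.sqrt_pos.mpr Padic.prime_pos).ne'
  have hp : ∀ k : ℤ, (p : ℂ) ^ k = (√p : ℂ) ^ (2 * k) := fun k ↦ by
    rw [zpow_mul, zpow_ofNat, ← ofReal_pow, Real.sq_sqrt (Nat.cast_nonneg p), ofReal_natCast]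
  have hconst : ((etaConst p i * etaConst p j * (p ^ j - p ^ (j - 1)) : ℝ) : ℂ) =
      (√p : ℂ) ^ (j - i) := by
    rw [etaConst_mul_etaConst, ofReal_zpow]
  calc ∫ t, padicFourier μ e (eta i) t * (starRingEnd ℂ) (eta j t) ∂μ
      = ∫ t in sphere 0 (p ^ j), padicFourier μ e (eta i) t * etaConst p j ∂μ := by
        rw [← integral_indicator isClosed_sphere.measurableSet]
        congr 1 with t
        rw [conj_eta, eta_eq_indicator j]
        exact (indicator_mul_right _ (padicFourier μ e (eta i)) _).symm
    _ = ∫ t in sphere 0 (p ^ j), etaConst p i * ((if i + j ≤ 0 then (p : ℂ) ^ i else 0) -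
          if i + j ≤ 1 then (p : ℂ) ^ (i - 1) else 0) * etaConst p j ∂μ := by
        refine setIntegral_congr_fun isClosed_sphere.measurableSet fun t ht ↦ ?_
        rw [padicFourier_eta, Padic.setIntegral_char_sphere μ e hμ he he1 he2
          (mem_sphere_zero_iff_norm.mp ht)]
    _ = ((etaConst p i * etaConst p j * (p ^ j - p ^ (j - 1)) : ℝ) : ℂ) *
          ((if i + j ≤ 0 then (p : ℂ) ^ i else 0) -
            if i + j ≤ 1 then (p : ℂ) ^ (i - 1) else 0) := by
        rw [setIntegral_const, Padic.addHaar_real_sphere_zpow, measureReal_def, hμ,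
          ENNReal.toReal_one, real_smul]
        push_cast
        ring
    _ = _ := by
        rw [hconst, hp, hp]
        split_ifs <;> simp only [mul_sub, mul_zero, ← zpow_add₀ hs] <;> ring_nf

end Fourier

section Circle

open Real

theorem circleAverage_div_sub_inv_mul_zpow {s : ℝ} (hs : 1 < s) (n : ℤ) :
    circleAverage (fun z : ℂ ↦ (s - z) / (s - z⁻¹) * z ^ (-n)) 0 1 =
      (if n ≤ 0 then (s : ℂ) ^ n else 0) - if n ≤ 1 then (s : ℂ) ^ (n - 2) else 0 := by
  have hs0 : (s : ℂ) ≠ 0 := by exact_mod_cast (zero_lt_one.trans hs).ne'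
  have hsub : ∀ z ∈ closedBall (0 : ℂ) 1, (s : ℂ) - z ≠ 0 := by
    intro z hz h
    rw [mem_closedBall_zero_iff, ← sub_eq_zero.mp h, norm_real, Real.norm_eq_abs] at hz
    linarith [le_abs_self s]
  have hsphere : ∀ z ∈ sphere (0 : ℂ) |1|, z ≠ 0 ∧ (s : ℂ) - z ≠ 0 := fun z hz ↦
    ⟨ne_zero_of_mem_sphere one_ne_zero ⟨z, by rwa [abs_one] at hz⟩,
      hsub z (sphere_subset_closedBall (by rwa [abs_one] at hz))⟩
  rcases le_or_gt n 0 with hn | hn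
  · obtain ⟨m, rfl⟩ := Int.exists_eq_neg_ofNat hn
    have hw : (s : ℂ)⁻¹ ∈ ball (0 : ℂ) |1| := by
      simpa [norm_inv, abs_of_pos (zero_lt_one.trans hs)] using inv_lt_one_of_one_lt₀ hs
    have hf : DiffContOnCl ℂ (fun z : ℂ ↦ z ^ m * (s - z) / s) (ball 0 |1|) :=
      Differentiable.diffContOnCl (by fun_prop)
    rw [← circleAverage_congr_sphere, hf.circleAverage_smul_div hw]
    · simp only [neg_nonpos, Nat.cast_nonneg, if_true, show -(m : ℤ) ≤ 1 by omega, zpow_neg,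
        zpow_natCast, inv_pow]
      rw [zpow_sub₀ hs0, zpow_neg, zpow_natCast]
      field_simp
    · intro z hz
      obtain ⟨hz0, hsz⟩ := hsphere z hz
      simp only [neg_neg, zpow_natCast, smul_eq_mul, sub_zero]
      field_simp
  · obtain ⟨k, rfl⟩ : ∃ k : ℕ, n = k + 1 := ⟨(n - 1).toNat, by omega⟩
    have hg : DiffContOnCl ℂ (fun z : ℂ ↦ (s * z - 1) * z ^ k / (s - z)) (ball 0 |1|) := by
      apply DifferentiableOn.diffContOnCl
      rw [closure_ball _ (by norm_num), abs_one]
      exact DifferentiableOn.div (by fun_prop) (by fun_prop) hsub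
    rw [← circleAverage_zero_one_congr_inv, ← circleAverage_congr_sphere, hg.circleAverage]
    · rcases k with _ | k
      · simp [neg_div]
      · rw [if_neg (by omega), if_neg (by omega)]
        simp
    · intro z hz
      obtain ⟨hz0, hsz⟩ := hsphere z hz
      simp only [inv_inv, inv_zpow', neg_neg, zpow_add_one₀ hz0, zpow_natCast]
      field_simp

lemma integral_div_sub_mul_exp_eq_circleAverage (s : ℝ) (n : ℤ) :
    1 / (2 * (Real.pi : ℂ)) * ∫ θ in (0 : ℝ)..2 * Real.pi,
      (s - exp (θ * I)) / (s - exp (-(θ * I))) * exp (-(n * θ * I)) =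
        circleAverage (fun z : ℂ ↦ (s - z) / (s - z⁻¹) * z ^ (-n)) 0 1 := by
  simp only [circleAverage_def, circleMap, Complex.real_smul, zero_add, ofReal_one, one_mul,
    ofReal_inv, ofReal_mul, ofReal_ofNat, ← Complex.exp_neg, ← Complex.exp_int_mul, zpow_neg]
  simp only [one_div, mul_assoc]

end Circle

/-- Under the isometry sending `η_i` to `z^i` on the circle, the additive Fourier
transform restricted to unit-invariant functions becomes the unitary operator
`f(z) ↦ ((√p − z)/(√p − conj z))·f(conj z)` on `L²(S¹)`:
`⟨𝓕(η_i), η_j⟩ = (1/2π)·∫_0^{2π} ((√p − e^{iθ})/(√p − e^{−iθ}))·e^{−i(i+j)θ} dθ`. -/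
theorem fourier_matrix_elements [MeasurableSpace ℚ_[p]] [BorelSpace ℚ_[p]]
    (μ : Measure ℚ_[p]) [μ.IsAddHaarMeasure] (hμ : μ {x : ℚ_[p] | ‖x‖ ≤ 1} = 1)
    (e : AddChar ℚ_[p] Circle) (he : Continuous e)
    (he1 : ∀ x : ℤ_[p], e (x : ℚ_[p]) = 1)
    (he2 : ∃ x : ℚ_[p], ‖x‖ ≤ p ∧ e x ≠ 1) (i j : ℤ) :
    (∫ t : ℚ_[p], padicFourier μ e (eta i) t * (starRingEnd ℂ) (eta j t) ∂μ) =
      (1 / (2 * (Real.pi : ℂ))) * ∫ θ in (0 : ℝ)..(2 * Real.pi),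
        (((Real.sqrt p : ℂ) - Complex.exp (θ * Complex.I)) /
          ((Real.sqrt p : ℂ) - Complex.exp (-(θ * Complex.I)))) *
            Complex.exp (-(((i + j : ℤ) : ℂ) * θ * Complex.I)) := by
  have hμ' : μ (closedBall 0 1) = 1 := by simpa [closedBall, dist_eq_norm] using hμ
  have hsqrt : 1 < √(p : ℝ) := Real.lt_sqrt_of_sq_lt (by simpa using Padic.one_lt_prime)
  rw [integral_padicFourier_eta_mul_conj_eta μ e hμ' he he1 he2,
    integral_div_sub_mul_exp_eq_circleAverage, circleAverage_div_sub_inv_mul_zpow hsqrt]
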